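/- arXiv:2510.26977 — 3 statements merged into one kernel-verified Lean document; each statement's English description precedes it below -/
import Mathlib

section
/- Assume Z_g·exp(i·φ_g) ≠ s_ref. Then the closed-loop dCVOC dynamics have exactly one equilibrium with nonzero current: the unique pair (î, ω_Δ) ∈ (ℂ \ {0}) × ℝ at which both right-hand sides of the dynamics vanish is î_s = −u_g/(Z_g·exp(i·φ_g) − s_ref) and ω_{Δ,s} = 0. -/
/-!
Rotating by `r = exp(i(π/2 − φ))` turns the current dynamics into
`dî/dt = k_p((A + iω_Δ)î + u_g r)` with `A = r(Z_g e^{iφ_g} − s_ref) ≠ 0`, and the bracket of the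
frequency dynamics into `Im(u_g r conj î)/|î|² + Im A`. Wherever the current dynamics vanish,
`u_g r conj î = −(A + iω_Δ)|î|²`, so the frequency dynamics reduce to `−(k_plli/k_p)|î| ω_Δ`.
Hence an equilibrium with `î ≠ 0` has `ω_Δ = 0`, and then `Aî = −u_g r`.
-/

open Complex ComplexConjugate

lemma im_mul_conj_div_sq_norm_of_mul_add_eq_zero {a b z : ℂ} (hz : z ≠ 0)
    (h : a * z + b = 0) : (b * conj z).im / ‖z‖ ^ 2 = -a.im := by
  have hb : b * conj z = -a * (normSq z : ℂ) := by
    rw [eq_neg_of_add_eq_zero_right h, ← mul_conj]; ring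
  have hnormSq : normSq z ≠ 0 := normSq_eq_zero.not.mpr hz
  rw [hb, Complex.sq_norm, neg_mul, neg_im, im_mul_ofReal]
  field_simp

theorem rotated_dcvoc_equilibrium_iff {A b z : ℂ} {κ c : ℝ} (hA : A ≠ 0) (hκ : κ ≠ 0)
    (hc : c ≠ 0) (hz : z ≠ 0) (ω : ℝ) :
    ((κ : ℂ) * ((A + I * ω) * z + b) = 0 ∧
        c * ‖z‖ * ((b * conj z).im / ‖z‖ ^ 2 + A.im) = 0) ↔
      (z = -b / A ∧ ω = 0) := by
  have hκ' : (κ : ℂ) ≠ 0 := ofReal_ne_zero.mpr hκ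
  have hnorm : ‖z‖ ≠ 0 := norm_ne_zero_iff.mpr hz
  constructor
  · rintro ⟨hcurrent, hfreq⟩
    have hlin : (A + I * ω) * z + b = 0 := (mul_eq_zero.mp hcurrent).resolve_left hκ'
    rw [im_mul_conj_div_sq_norm_of_mul_add_eq_zero hz hlin] at hfreq
    have hω : ω = 0 := by simpa [hc, hnorm] using hfreq
    subst hω
    refine ⟨?_, rfl⟩
    rw [eq_div_iff hA]
    linear_combination (by simpa using hlin : A * z + b = 0)
  · rintro ⟨rfl, rfl⟩
    have hlin : A * (-b / A) + b = 0 := by field_simp; ring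
    rw [im_mul_conj_div_sq_norm_of_mul_add_eq_zero hz hlin]
    simp [hlin]

theorem stmt_1_general (ug Zg φg kp kplli φ : ℝ)
    (hkp : 0 < kp) (hkplli : 0 < kplli)
    (sref : ℂ)
    (pφref qφref : ℝ)
    (hpq : (pφref : ℂ) + Complex.I * qφref
      = Complex.exp (Complex.I * (Real.pi / 2 - φ)) * sref)
    (hne : (Zg : ℂ) * Complex.exp (Complex.I * φg) ≠ sref)
    -- right-hand side of the current dynamics dî/dt :
    (F : ℂ → ℝ → ℂ)
    (hF : ∀ i ω, F i ω = (kp : ℂ) *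
      (((Zg : ℂ) * Complex.exp (Complex.I * (Real.pi / 2 + φg - φ))
          - ((pφref : ℂ) + Complex.I * ((qφref : ℂ) - (ω : ℂ)))) * i
        + (ug : ℂ) * Complex.exp (Complex.I * (Real.pi / 2 - φ))))
    -- right-hand side of the frequency dynamics dω_Δ/dt :
    (G : ℂ → ℝ → ℝ)
    (hG : ∀ i ω, G i ω = (kplli / kp) * ‖i‖ *
      ((((ug : ℂ) * Complex.exp (Complex.I * (Real.pi / 2 - φ))) * (starRingEnd ℂ) i).im
          / (‖i‖) ^ 2
        + Zg * Real.sin (Real.pi / 2 + φg - φ) - qφref)) :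
    ∀ i : ℂ, ∀ ω : ℝ, i ≠ 0 →
      ((F i ω = 0 ∧ G i ω = 0) ↔
        (i = -(ug : ℂ) / ((Zg : ℂ) * Complex.exp (Complex.I * φg) - sref) ∧ ω = 0)) := by
  intro i ω hi
  set r := exp (I * (Real.pi / 2 - φ))
  set X := (Zg : ℂ) * exp (I * φg) - sref
  have hrX : r * X = Zg * exp (↑(Real.pi / 2 + φg - φ) * I) - (pφref + I * qφref) := by
    rw [hpq, mul_sub, ← mul_assoc, mul_comm r, mul_assoc, ← exp_add]
    push_cast
    ring_nf
  have hF' : F i ω = kp * ((r * X + I * ω) * i + ug * r) := by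
    rw [hF, hrX]
    push_cast
    ring_nf
  have hG' : G i ω = kplli / kp * ‖i‖ * ((ug * r * conj i).im / ‖i‖ ^ 2 + (r * X).im) := by
    rw [hG, hrX, sub_im, im_ofReal_mul, exp_ofReal_mul_I_im]
    simp only [add_im, ofReal_im, mul_im, I_re, I_im, ofReal_re]
    ring
  have hX : X ≠ 0 := sub_ne_zero.mpr hne
  have hr : r ≠ 0 := exp_ne_zero _
  rw [hF', hG', rotated_dcvoc_equilibrium_iff (mul_ne_zero hr hX) hkp.ne'
    (div_ne_zero hkplli.ne' hkp.ne') hi, mul_comm _ r, neg_div, neg_div, mul_div_mul_left _ _ hr]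

/-- Assume `Z_g·exp(i·φ_g) ≠ s_ref`. Then the closed-loop dCVOC dynamics
have exactly one equilibrium with nonzero current: the unique pair
`(î, ω_Δ) ∈ (ℂ \ {0}) × ℝ` at which both right-hand sides of the dynamics vanish is
`î_s = −u_g/(Z_g·exp(i·φ_g) − s_ref)` and `ω_{Δ,s} = 0`. -/
theorem stmt_1 (ug Zg φg pref qref iref kp kplli φ : ℝ)
    (hug : 0 < ug) (hZ : 0 < Zg) (hiref : 0 < iref) (hkp : 0 < kp) (hkplli : 0 < kplli)
    (sref : ℂ) (hsref : sref = ((pref : ℂ) + Complex.I * qref) / (iref : ℂ) ^ 2)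
    (pφref qφref : ℝ)
    (hpq : (pφref : ℂ) + Complex.I * qφref
      = Complex.exp (Complex.I * (Real.pi / 2 - φ)) * sref)
    (hne : (Zg : ℂ) * Complex.exp (Complex.I * φg) ≠ sref)
    -- right-hand side of the current dynamics dî/dt :
    (F : ℂ → ℝ → ℂ)
    (hF : ∀ i ω, F i ω = (kp : ℂ) *
      (((Zg : ℂ) * Complex.exp (Complex.I * (Real.pi / 2 + φg - φ))
          - ((pφref : ℂ) + Complex.I * ((qφref : ℂ) - (ω : ℂ)))) * i
        + (ug : ℂ) * Complex.exp (Complex.I * (Real.pi / 2 - φ))))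
    -- right-hand side of the frequency dynamics dω_Δ/dt :
    (G : ℂ → ℝ → ℝ)
    (hG : ∀ i ω, G i ω = (kplli / kp) * ‖i‖ *
      ((((ug : ℂ) * Complex.exp (Complex.I * (Real.pi / 2 - φ))) * (starRingEnd ℂ) i).im
          / (‖i‖) ^ 2
        + Zg * Real.sin (Real.pi / 2 + φg - φ) - qφref)) :
    ∀ i : ℂ, ∀ ω : ℝ, i ≠ 0 →
      ((F i ω = 0 ∧ G i ω = 0) ↔
        (i = -(ug : ℂ) / ((Zg : ℂ) * Complex.exp (Complex.I * φg) - sref) ∧ ω = 0)) :=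
  stmt_1_general ug Zg φg kp kplli φ hkp hkplli sref pφref qφref hpq hne F hF G hG
end

section
/- Assume Z_g·exp(i·φ_g) ≠ s_ref, (p_ref, q_ref) ≠ (0, 0), and additionally i_ref = √(p_ref² + q_ref²). Let î_s := −u_g/(Z_g·exp(i·φ_g) − s_ref) and u⃗_s := u_g + Z_g·exp(i·φ_g)·î_s. Then |î_s| = |u⃗_s|·i_ref and u⃗_s·conj(î_s) = |u⃗_s|²·(p_ref + i·q_ref); in particular, if |u⃗_s| = 1 then the equilibrium active and reactive power equal the references p_ref and q_ref and the equilibrium current magnitude equals i_ref. -/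
/-
At equilibrium the network equation collapses to `u⃗_s = s_ref · î_s`: the converter behaves
like the constant impedance `s_ref` seen from the grid. Since `|p_ref + i q_ref| = i_ref`, this
impedance has modulus `1 / i_ref`, which gives `|î_s| = i_ref |u⃗_s|`, and then
`u⃗_s · conj î_s = s_ref |î_s|² = |u⃗_s|² (p_ref + i q_ref)`.
-/

open Complex ComplexConjugate

theorem add_mul_eq_mul_of_eq_neg_div_sub {K : Type*} [Field K] {u z s i : K} (hzs : z ≠ s)
    (hi : i = -u / (z - s)) : u + z * i = s * i := by
  rw [hi]
  field_simp [sub_ne_zero.mpr hzs]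
  ring

section ScaledImpedance

variable {S i v : ℂ} {r : ℝ}

theorem norm_eq_norm_mul_of_eq_div_sq_mul (hr : 0 < r) (hS : ‖S‖ = r)
    (hv : v = S / (r : ℂ) ^ 2 * i) : ‖i‖ = ‖v‖ * r := by
  rw [hv, norm_mul, norm_div, hS, norm_pow, norm_real, Real.norm_of_nonneg hr.le]
  field_simp

theorem mul_conj_eq_norm_sq_mul_of_eq_div_sq_mul (hr : 0 < r) (hS : ‖S‖ = r)
    (hv : v = S / (r : ℂ) ^ 2 * i) : v * conj i = (‖v‖ : ℂ) ^ 2 * S := by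
  have hr' : (r : ℂ) ≠ 0 := ofReal_ne_zero.mpr hr.ne'
  calc v * conj i = S / (r : ℂ) ^ 2 * (i * conj i) := by rw [hv]; ring
    _ = S / (r : ℂ) ^ 2 * ((‖v‖ : ℂ) * r) ^ 2 := by
        rw [mul_conj', norm_eq_norm_mul_of_eq_div_sq_mul hr hS hv, ofReal_mul]
    _ = (‖v‖ : ℂ) ^ 2 * S := by field_simp

end ScaledImpedance

theorem stmt_3_general (ug Zg φg pref qref iref : ℝ)
    (hiref : 0 < iref)
    (sref : ℂ) (hsref : sref = ((pref : ℂ) + Complex.I * qref) / (iref : ℂ) ^ 2)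
    (hne : (Zg : ℂ) * Complex.exp (Complex.I * φg) ≠ sref)
    (hi : iref = Real.sqrt (pref ^ 2 + qref ^ 2))
    (is : ℂ) (his : is = -(ug : ℂ) / ((Zg : ℂ) * Complex.exp (Complex.I * φg) - sref))
    (us : ℂ) (hus : us = (ug : ℂ) + (Zg : ℂ) * Complex.exp (Complex.I * φg) * is) :
    ‖is‖ = ‖us‖ * iref ∧
    us * (starRingEnd ℂ) is
      = (‖us‖ : ℂ) ^ 2 * ((pref : ℂ) + Complex.I * qref) ∧
    (‖us‖ = 1 →
      us * (starRingEnd ℂ) is = (pref : ℂ) + Complex.I * qref ∧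
      ‖is‖ = iref) := by
  have hS : ‖(pref : ℂ) + I * qref‖ = iref := by rw [mul_comm, norm_add_mul_I, hi]
  have hus' : us = ((pref : ℂ) + I * qref) / (iref : ℂ) ^ 2 * is := by
    rw [hus, ← hsref, add_mul_eq_mul_of_eq_neg_div_sub hne his]
  have hnorm := norm_eq_norm_mul_of_eq_div_sq_mul hiref hS hus'
  have hpower := mul_conj_eq_norm_sq_mul_of_eq_div_sq_mul hiref hS hus'
  refine ⟨hnorm, hpower, fun hunit => ⟨?_, ?_⟩⟩
  · rw [hpower, hunit, ofReal_one, one_pow, one_mul]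
  · rw [hnorm, hunit, one_mul]

/-- Assume `Z_g·exp(i·φ_g) ≠ s_ref`, `(p_ref, q_ref) ≠ (0, 0)`, and
additionally `i_ref = √(p_ref² + q_ref²)`. Let `î_s := −u_g/(Z_g·exp(i·φ_g) − s_ref)` and
`u⃗_s := u_g + Z_g·exp(i·φ_g)·î_s`. Then `|î_s| = |u⃗_s|·i_ref` and
`u⃗_s·conj(î_s) = |u⃗_s|²·(p_ref + i·q_ref)`; in particular, if `|u⃗_s| = 1` then the
equilibrium active and reactive power equal the references `p_ref` and `q_ref` and the
equilibrium current magnitude equals `i_ref`. -/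
theorem stmt_3 (ug Zg φg pref qref iref : ℝ)
    (hug : 0 < ug) (hZ : 0 < Zg) (hiref : 0 < iref)
    (sref : ℂ) (hsref : sref = ((pref : ℂ) + Complex.I * qref) / (iref : ℂ) ^ 2)
    (hne : (Zg : ℂ) * Complex.exp (Complex.I * φg) ≠ sref)
    (hpq : (pref, qref) ≠ (0, 0))
    (hi : iref = Real.sqrt (pref ^ 2 + qref ^ 2))
    (is : ℂ) (his : is = -(ug : ℂ) / ((Zg : ℂ) * Complex.exp (Complex.I * φg) - sref))
    (us : ℂ) (hus : us = (ug : ℂ) + (Zg : ℂ) * Complex.exp (Complex.I * φg) * is) :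
    ‖is‖ = ‖us‖ * iref ∧
    us * (starRingEnd ℂ) is
      = (‖us‖ : ℂ) ^ 2 * ((pref : ℂ) + Complex.I * qref) ∧
    (‖us‖ = 1 →
      us * (starRingEnd ℂ) is = (pref : ℂ) + Complex.I * qref ∧
      ‖is‖ = iref) :=
  stmt_3_general ug Zg φg pref qref iref hiref sref hsref hne hi is his us hus
end

section
/- Let a := Z_g·cos(π/2 + φ_g − φ) − p_φ^ref and b := Z_g·sin(π/2 + φ_g − φ) − q_φ^ref, fix x ∈ ℝ with a + i·(b + x) ≠ 0, and set w(x) := −u_g·exp(i(π/2 − φ))/(a + i·(b + x)). Then |w(x)|·( Im(u_g·exp(i(π/2 − φ))·conj(w(x)))/|w(x)|² + Z_g·sin(π/2 + φ_g − φ) − q_φ^ref ) = −u_g·x/√(a² + (b + x)²). -/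
open Complex ComplexConjugate

/-! With `z := u_g·exp(i(π/2 − φ))` and `d := a + i(b + x)` we have `w = −z/d`, so
`z·conj w = −|z|²/conj d = −(|z|²/|d|²)·d` and `|w| = |z|/|d|`. Hence the bracket equals
`−Im d + b = −x`, and since `|z| = u_g`, multiplying by `|w| = u_g/|d|` gives the claim. -/

namespace Complex

theorem mul_conj_neg_div (z d : ℂ) : z * conj (-z / d) = -((normSq z / normSq d : ℝ) * d) := by
  rw [map_div₀, map_neg, div_eq_mul_inv, ← map_inv₀, inv_def, map_mul, conj_conj, conj_ofReal,
    neg_mul, mul_neg, ← mul_assoc, mul_conj]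
  push_cast
  ring

theorem im_mul_conj_neg_div_div_norm_sq {z d : ℂ} (hz : z ≠ 0) (hd : d ≠ 0) :
    (z * conj (-z / d)).im / ‖-z / d‖ ^ 2 = -d.im := by
  rw [mul_conj_neg_div, neg_im, im_ofReal_mul, ← normSq_eq_norm_sq, normSq_div, normSq_neg]
  have hz_pos := normSq_pos.mpr hz
  have hd_pos := normSq_pos.mpr hd
  field_simp

theorem norm_add_I_mul (x y : ℝ) : ‖(x : ℂ) + I * y‖ = √(x ^ 2 + y ^ 2) := by
  rw [mul_comm, norm_add_mul_I]

end Complex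

theorem stmt_7_general (ug Zg φg φ : ℝ)
    (hug : 0 < ug)
    (qφref : ℝ)
    (a b : ℝ)
    (hb : b = Zg * Real.sin (Real.pi / 2 + φg - φ) - qφref)
    (x : ℝ) (hx : (a : ℂ) + Complex.I * ((b : ℂ) + x) ≠ 0)
    (w : ℂ)
    (hw : w = -((ug : ℂ) * Complex.exp (Complex.I * (Real.pi / 2 - φ)))
            / ((a : ℂ) + Complex.I * ((b : ℂ) + x))) :
    ‖w‖ *
      ((((ug : ℂ) * Complex.exp (Complex.I * (Real.pi / 2 - φ))) * (starRingEnd ℂ) w).im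
          / (‖w‖) ^ 2
        + Zg * Real.sin (Real.pi / 2 + φg - φ) - qφref)
      = -(ug * x) / Real.sqrt (a ^ 2 + (b + x) ^ 2) := by
  set z : ℂ := ug * Complex.exp (Complex.I * (Real.pi / 2 - φ))
  set d : ℂ := (a : ℂ) + Complex.I * ((b : ℂ) + x)
  have hz : ‖z‖ = ug := by
    rw [norm_mul, norm_real, Real.norm_of_nonneg hug.le,
      show ‖Complex.exp (Complex.I * (Real.pi / 2 - φ))‖ = 1 from
        mod_cast norm_exp_I_mul_ofReal (Real.pi / 2 - φ), mul_one]
  have hd : ‖d‖ = Real.sqrt (a ^ 2 + (b + x) ^ 2) := by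
    rw [← norm_add_I_mul, ofReal_add]
  have hd_im : d.im = b + x := by simp [d]
  have hz0 : z ≠ 0 := norm_ne_zero_iff.mp (hz ▸ hug.ne')
  subst hw
  rw [im_mul_conj_neg_div_div_norm_sq hz0 hx, hd_im, add_sub_assoc, ← hb, norm_div, norm_neg,
    hz, hd]
  ring

/-- Let `a := Z_g·cos(π/2 + φ_g − φ) − p_φ^ref` and
`b := Z_g·sin(π/2 + φ_g − φ) − q_φ^ref`, fix `x ∈ ℝ` with `a + i·(b + x) ≠ 0`, and set
`w(x) := −u_g·exp(i(π/2 − φ))/(a + i·(b + x))`. Then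
`|w(x)|·( Im(u_g·exp(i(π/2 − φ))·conj(w(x)))/|w(x)|² + Z_g·sin(π/2 + φ_g − φ) − q_φ^ref )
 = −u_g·x/√(a² + (b + x)²)`. -/
theorem stmt_7 (ug Zg φg pref qref iref φ : ℝ)
    (hug : 0 < ug) (hZ : 0 < Zg) (hiref : 0 < iref)
    (sref : ℂ) (hsref : sref = ((pref : ℂ) + Complex.I * qref) / (iref : ℂ) ^ 2)
    (pφref qφref : ℝ)
    (hpq : (pφref : ℂ) + Complex.I * qφref
      = Complex.exp (Complex.I * (Real.pi / 2 - φ)) * sref)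
    (a b : ℝ)
    (ha : a = Zg * Real.cos (Real.pi / 2 + φg - φ) - pφref)
    (hb : b = Zg * Real.sin (Real.pi / 2 + φg - φ) - qφref)
    (x : ℝ) (hx : (a : ℂ) + Complex.I * ((b : ℂ) + x) ≠ 0)
    (w : ℂ)
    (hw : w = -((ug : ℂ) * Complex.exp (Complex.I * (Real.pi / 2 - φ)))
            / ((a : ℂ) + Complex.I * ((b : ℂ) + x))) :
    ‖w‖ *
      ((((ug : ℂ) * Complex.exp (Complex.I * (Real.pi / 2 - φ))) * (starRingEnd ℂ) w).im
          / (‖w‖) ^ 2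
        + Zg * Real.sin (Real.pi / 2 + φg - φ) - qφref)
      = -(ug * x) / Real.sqrt (a ^ 2 + (b + x) ^ 2) :=
  stmt_7_general ug Zg φg φ hug qφref a b hb x hx w hw
end
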